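/- Let A ∈ ℂ^{m×n} with SVD A = UΣV*, target rank r < min(m,n), and let R ∈ ℝ^{d×n} be a random matrix such that, with probability at least 1−δ, both ‖R‖² ≤ max(e²μ, log(2d/δ) − μ) with μ = nα/d, and σ_min(RV₁)² ≥ 1−ε, where V₁ consists of the top r right singular vectors and ε ∈ (0,1). Then with probability at least 1−δ, for Y = AR^T, ‖(I − P_Y)A‖ ≤ σ_{r+1}(A) · √(1 + (1/(1−ε)) · max(e²nα/d, log(2d/δ) − nα/d)). -/

import Mathlib

open MeasureTheory Matrix

/-- Euclidean norm of a real vector. -/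
noncomputable def vnormR {α : Type*} [Fintype α] (x : α → ℝ) : ℝ :=
  Real.sqrt (∑ i, x i ^ 2)

/-- Euclidean norm of a complex vector. -/
noncomputable def vnormC {α : Type*} [Fintype α] (x : α → ℂ) : ℝ :=
  Real.sqrt (∑ i, ‖x i‖ ^ 2)

/-- Spectral norm of a real matrix. -/
noncomputable def specNorm {α β : Type*} [Fintype α] [Fintype β]
    (A : Matrix α β ℝ) : ℝ :=
  sSup {c : ℝ | ∃ x : β → ℝ, vnormR x = 1 ∧ c = vnormR (A.mulVec x)}

/-- Spectral norm of a complex matrix. -/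
noncomputable def specNormC {α β : Type*} [Fintype α] [Fintype β]
    (A : Matrix α β ℂ) : ℝ :=
  sSup {c : ℝ | ∃ x : β → ℂ, vnormC x = 1 ∧ c = vnormC (A.mulVec x)}

/-- Smallest singular value of a complex matrix. -/
noncomputable def sigmaMinC {α β : Type*} [Fintype α] [Fintype β]
    (B : Matrix α β ℂ) : ℝ :=
  sInf {c : ℝ | ∃ x : β → ℂ, vnormC x = 1 ∧ c = vnormC (B.mulVec x)}

/-! On the event, the bound is deterministic. Write `Vᴴ x = (u, w)` with `u` the top-`r` block.
Since `σ_min(R V₁) ≥ √(1 - ε)`, the Gram matrix of `B = R V₁` is invertible and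
`z = B (Bᴴ B)⁻¹ u` solves `Bᴴ z = u` with `‖z‖ ≤ ‖u‖ / √(1 - ε)`. Then `g = x - Rᵀ z` has
vanishing top block in the `V`-coordinates, and `(1 - P) A x = (1 - P) A g` because
`A Rᵀ z = Y z` lies in the range of `P`. Hence
`‖(1 - P) A x‖ ≤ ‖A g‖ ≤ ‖Σ₂‖ (‖w‖ + ‖R‖ ‖u‖ / √(1 - ε))`, and Cauchy–Schwarz in `ℝ²` bounds
the bracket by `√(1 + ‖R‖² / (1 - ε)) ‖x‖`. -/

open WithLp

section EuclideanNorm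
variable {m n : Type*} [Fintype m] [Fintype n]

theorem vnormC_eq_norm (x : n → ℂ) : vnormC x = ‖toLp 2 x‖ := by
  rw [EuclideanSpace.norm_eq]; rfl

theorem vnormR_eq_norm (x : n → ℝ) : vnormR x = ‖toLp 2 x‖ := by
  simp [EuclideanSpace.norm_eq, vnormR]

theorem vnormC_nonneg (x : n → ℂ) : 0 ≤ vnormC x := Real.sqrt_nonneg _

theorem vnormC_eq_zero {x : n → ℂ} : vnormC x = 0 ↔ x = 0 := by
  rw [vnormC_eq_norm, norm_eq_zero, toLp_eq_zero]

theorem vnormC_smul (a : ℂ) (x : n → ℂ) : vnormC (a • x) = ‖a‖ * vnormC x := by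
  rw [vnormC_eq_norm, vnormC_eq_norm, toLp_smul, norm_smul]

theorem vnormC_sub_le (x y : n → ℂ) : vnormC (x - y) ≤ vnormC x + vnormC y := by
  simp only [vnormC_eq_norm, toLp_sub]
  exact norm_sub_le _ _

theorem vnormC_sq (x : n → ℂ) : vnormC x ^ 2 = ∑ i, ‖x i‖ ^ 2 :=
  Real.sq_sqrt (Finset.sum_nonneg fun _ _ => sq_nonneg _)

theorem vnormR_sq (x : n → ℝ) : vnormR x ^ 2 = ∑ i, x i ^ 2 :=
  Real.sq_sqrt (Finset.sum_nonneg fun _ _ => sq_nonneg _)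

theorem vnormC_sq_eq_re_add_im (v : n → ℂ) :
    vnormC v ^ 2 = vnormR (fun i => (v i).re) ^ 2 + vnormR (fun i => (v i).im) ^ 2 := by
  rw [vnormC_sq, vnormR_sq, vnormR_sq, ← Finset.sum_add_distrib]
  simp only [Complex.sq_norm, Complex.normSq_apply, ← sq]

theorem vnormC_sq_sum_elim {α β : Type*} [Fintype α] [Fintype β] (p : α ⊕ β → ℂ) :
    vnormC p ^ 2 = vnormC (p ∘ Sum.inl) ^ 2 + vnormC (p ∘ Sum.inr) ^ 2 := by
  simp only [vnormC_sq, Fintype.sum_sum_type, Function.comp_apply]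

theorem vnormC_comp_inr_le {α β : Type*} [Fintype α] [Fintype β] (p : α ⊕ β → ℂ) :
    vnormC (p ∘ Sum.inr) ≤ vnormC p := by
  refine (sq_le_sq₀ (vnormC_nonneg _) (vnormC_nonneg _)).mp ?_
  rw [vnormC_sq_sum_elim p]
  exact le_add_of_nonneg_left (sq_nonneg _)

theorem vnormC_eq_vnormC_comp_inr {α β : Type*} [Fintype α] [Fintype β] {p : α ⊕ β → ℂ}
    (hp : p ∘ Sum.inl = 0) : vnormC p = vnormC (p ∘ Sum.inr) := by
  refine (sq_eq_sq₀ (vnormC_nonneg _) (vnormC_nonneg _)).mp ?_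
  rw [vnormC_sq_sum_elim, hp, vnormC_eq_zero.mpr rfl]
  ring

theorem vnormC_sq_eq_re_dotProduct (x : n → ℂ) : vnormC x ^ 2 = (star x ⬝ᵥ x).re := by
  rw [vnormC_eq_norm, ← inner_self_eq_norm_sq (𝕜 := ℂ), EuclideanSpace.inner_toLp_toLp,
    dotProduct_comm]
  rfl

theorem re_star_dotProduct_le (x y : n → ℂ) : (star x ⬝ᵥ y).re ≤ vnormC x * vnormC y := by
  rw [vnormC_eq_norm, vnormC_eq_norm, dotProduct_comm, ← EuclideanSpace.inner_toLp_toLp]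
  exact re_inner_le_norm (𝕜 := ℂ) _ _

theorem vnormC_mulVec_sq (B : Matrix m n ℂ) (y : n → ℂ) :
    vnormC (B *ᵥ y) ^ 2 = (star y ⬝ᵥ (Bᴴ * B) *ᵥ y).re := by
  rw [vnormC_sq_eq_re_dotProduct, star_mulVec, ← dotProduct_mulVec, ← mulVec_mulVec]

theorem specNormC_nonneg (M : Matrix m n ℂ) : 0 ≤ specNormC M :=
  Real.sSup_nonneg (by rintro _ ⟨x, -, rfl⟩; exact vnormC_nonneg _)

theorem sigmaMinC_nonneg (B : Matrix m n ℂ) : 0 ≤ sigmaMinC B :=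
  Real.sInf_nonneg (by rintro _ ⟨x, -, rfl⟩; exact vnormC_nonneg _)

theorem sigmaMinC_mul_le (B : Matrix m n ℂ) (x : n → ℂ) :
    sigmaMinC B * vnormC x ≤ vnormC (B *ᵥ x) := by
  rcases (vnormC_nonneg x).eq_or_lt with hx | hx
  · rw [← hx, mul_zero]
    exact vnormC_nonneg _
  have hunit : vnormC (((vnormC x)⁻¹ : ℂ) • x) = 1 := by
    rw [vnormC_smul, norm_inv, Complex.norm_real, Real.norm_of_nonneg hx.le,
      inv_mul_cancel₀ hx.ne']
  have hle : sigmaMinC B ≤ vnormC (B *ᵥ (((vnormC x)⁻¹ : ℂ) • x)) :=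
    csInf_le ⟨0, by rintro _ ⟨y, -, rfl⟩; exact vnormC_nonneg _⟩ ⟨_, hunit, rfl⟩
  rw [mulVec_smul, vnormC_smul, norm_inv, Complex.norm_real, Real.norm_of_nonneg hx.le] at hle
  rwa [← le_div_iff₀ hx, div_eq_inv_mul]

theorem exists_conjTranspose_mulVec_eq [DecidableEq n] (B : Matrix m n ℂ) {c : ℝ} (hc : 0 < c)
    (hB : ∀ y, c * vnormC y ≤ vnormC (B *ᵥ y)) (u : n → ℂ) :
    ∃ z, Bᴴ *ᵥ z = u ∧ c * vnormC z ≤ vnormC u := by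
  have hinj : Function.Injective (Bᴴ * B).mulVec := by
    refine (injective_iff_map_eq_zero (Bᴴ * B).mulVecLin).mpr fun y hy => ?_
    have hBy : vnormC (B *ᵥ y) = 0 := by
      rw [mulVecLin_apply] at hy
      rw [← sq_eq_zero_iff, vnormC_mulVec_sq, hy, dotProduct_zero, Complex.zero_re]
    refine vnormC_eq_zero.mp (le_antisymm ?_ (vnormC_nonneg y))
    nlinarith [hB y]
  obtain ⟨y, hy⟩ := mulVec_surjective_iff_isUnit.mpr (mulVec_injective_iff_isUnit.mp hinj) u
  refine ⟨B *ᵥ y, by rw [mulVec_mulVec, hy], ?_⟩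
  have hsq : vnormC (B *ᵥ y) ^ 2 ≤ vnormC y * vnormC u := by
    rw [vnormC_mulVec_sq, hy]
    exact re_star_dotProduct_le y u
  have hcsq : c * vnormC (B *ᵥ y) * vnormC (B *ᵥ y) ≤ vnormC u * vnormC (B *ᵥ y) := by
    nlinarith [hB y, vnormC_nonneg u]
  rcases (vnormC_nonneg (B *ᵥ y)).eq_or_lt with hz | hz
  · rw [← hz, mul_zero]
    exact vnormC_nonneg u
  · exact le_of_mul_le_mul_right hcsq hz

end EuclideanNorm

theorem conjTranspose_map_ofReal {m n : Type*} (R : Matrix m n ℝ) :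
    (R.map Complex.ofReal)ᴴ = Rᵀ.map Complex.ofReal := by
  rw [← conjTranspose_eq_transpose_of_trivial,
    conjTranspose_map _ fun _ => (Complex.conj_ofReal _).symm]

theorem add_mul_le_sqrt_one_add_sq_mul_sqrt (a b t : ℝ) :
    a + t * b ≤ √(1 + t ^ 2) * √(a ^ 2 + b ^ 2) := by
  rw [← Real.sqrt_mul (by positivity)]
  exact (le_abs_self _).trans (Real.abs_le_sqrt (by nlinarith [sq_nonneg (t * a - b)]))

section L2OpNorm
open scoped Matrix.Norms.L2Operator

theorem sSup_norm_mulVec_sphere_eq_l2_opNorm {𝕜 m n : Type*} [RCLike 𝕜] [Fintype m] [Fintype n]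
    [DecidableEq n] (M : Matrix m n 𝕜) :
    sSup {c : ℝ | ∃ x : n → 𝕜, ‖toLp 2 x‖ = 1 ∧ c = ‖toLp 2 (M *ᵥ x)‖} = ‖M‖ := by
  rw [l2_opNorm_def, ← ContinuousLinearMap.sSup_sphere_eq_norm]
  congr 1
  ext c
  constructor
  · rintro ⟨x, hx, rfl⟩
    exact ⟨toLp 2 x, by simpa using hx, rfl⟩
  · rintro ⟨x, hx, rfl⟩
    exact ⟨ofLp x, by simpa using hx, rfl⟩

variable {m n : Type*} [Fintype m] [Fintype n] [DecidableEq n]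

theorem specNormC_eq_l2_opNorm (M : Matrix m n ℂ) : specNormC M = ‖M‖ := by
  simp only [specNormC, vnormC_eq_norm]
  exact sSup_norm_mulVec_sphere_eq_l2_opNorm M

theorem specNorm_eq_l2_opNorm (M : Matrix m n ℝ) : specNorm M = ‖M‖ := by
  simp only [specNorm, vnormR_eq_norm]
  exact sSup_norm_mulVec_sphere_eq_l2_opNorm M

theorem vnormC_mulVec_le (M : Matrix m n ℂ) (x : n → ℂ) :
    vnormC (M *ᵥ x) ≤ ‖M‖ * vnormC x := by
  rw [vnormC_eq_norm, vnormC_eq_norm]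
  exact M.l2_opNorm_mulVec (toLp 2 x)

theorem vnormR_mulVec_le (M : Matrix m n ℝ) (x : n → ℝ) :
    vnormR (M *ᵥ x) ≤ ‖M‖ * vnormR x := by
  rw [vnormR_eq_norm, vnormR_eq_norm]
  exact M.l2_opNorm_mulVec (toLp 2 x)

theorem l2_opNorm_le_of_vnormC_mulVec_le (M : Matrix m n ℂ) {K : ℝ} (hK : 0 ≤ K)
    (h : ∀ x, vnormC (M *ᵥ x) ≤ K * vnormC x) : ‖M‖ ≤ K := by
  rw [l2_opNorm_def]
  refine ContinuousLinearMap.opNorm_le_bound _ hK fun x => ?_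
  have hx := h (ofLp x)
  rwa [vnormC_eq_norm, vnormC_eq_norm] at hx

theorem vnormC_map_ofReal_mulVec_le (M : Matrix m n ℝ) (z : n → ℂ) :
    vnormC (M.map Complex.ofReal *ᵥ z) ≤ ‖M‖ * vnormC z := by
  have hre : (fun i => ((M.map Complex.ofReal *ᵥ z) i).re) = M *ᵥ fun j => (z j).re := by
    ext i; simp [mulVec, dotProduct, Complex.re_sum]
  have him : (fun i => ((M.map Complex.ofReal *ᵥ z) i).im) = M *ᵥ fun j => (z j).im := by
    ext i; simp [mulVec, dotProduct, Complex.im_sum]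
  refine (sq_le_sq₀ (vnormC_nonneg _) (mul_nonneg (norm_nonneg M) (vnormC_nonneg z))).mp ?_
  rw [mul_pow, vnormC_sq_eq_re_add_im, vnormC_sq_eq_re_add_im, hre, him, mul_add]
  gcongr <;> rw [← mul_pow] <;>
    exact pow_le_pow_left₀ (Real.sqrt_nonneg _) (vnormR_mulVec_le M _) 2

theorem l2_opNorm_transpose [DecidableEq m] (R : Matrix m n ℝ) : ‖Rᵀ‖ = ‖R‖ := by
  rw [← conjTranspose_eq_transpose_of_trivial, l2_opNorm_conjTranspose]

theorem l2_opNorm_le_one_of_conjTranspose_mul_self (U : Matrix m n ℂ) (hU : Uᴴ * U = 1) :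
    ‖U‖ ≤ 1 := by
  have hone : ‖(1 : Matrix n n ℂ)‖ ≤ 1 := by
    rw [← diagonal_one, l2_opNorm_diagonal]
    exact (pi_norm_le_iff_of_nonneg zero_le_one).mpr fun _ => by simp
  have hUU := l2_opNorm_conjTranspose_mul_self U
  rw [hU] at hUU
  nlinarith [norm_nonneg U]

theorem vnormC_conjTranspose_mulVec_le {V : Matrix n n ℂ} (hV : Vᴴ * V = 1) (w : n → ℂ) :
    vnormC (Vᴴ *ᵥ w) ≤ vnormC w :=
  (vnormC_mulVec_le _ w).trans <| mul_le_of_le_one_left (vnormC_nonneg w) <|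
    (l2_opNorm_conjTranspose V).trans_le (l2_opNorm_le_one_of_conjTranspose_mul_self V hV)

theorem vnormC_mulVec_le_of_isStarProjection {Q : Matrix n n ℂ} (hQ : IsStarProjection Q)
    (v : n → ℂ) : vnormC (Q *ᵥ v) ≤ vnormC v :=
  (vnormC_mulVec_le Q v).trans (mul_le_of_le_one_left (vnormC_nonneg v) hQ.norm_le)

variable {d ι κ : Type*} [Fintype d] [DecidableEq d] [Fintype ι] [DecidableEq ι] [Fintype κ]
  [DecidableEq κ]

theorem vnormC_svd_mulVec_le (U : Matrix m (ι ⊕ κ) ℂ) (V : Matrix (ι ⊕ κ) (ι ⊕ κ) ℂ)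
    (s : ι ⊕ κ → ℝ) (hU : Uᴴ * U = 1) (g : ι ⊕ κ → ℂ) (hg : (Vᴴ *ᵥ g) ∘ Sum.inl = 0) :
    vnormC ((U * diagonal (fun i => (s i : ℂ)) * Vᴴ) *ᵥ g) ≤
      ‖diagonal (fun i : κ => (s (Sum.inr i) : ℂ))‖ * vnormC ((Vᴴ *ᵥ g) ∘ Sum.inr) := by
  set q := Vᴴ *ᵥ g
  have hinl : (diagonal (fun i => (s i : ℂ)) *ᵥ q) ∘ Sum.inl = 0 := by
    ext i
    simpa [mulVec_diagonal] using Or.inr (congrFun hg i)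
  have hinr : (diagonal (fun i => (s i : ℂ)) *ᵥ q) ∘ Sum.inr =
      diagonal (fun i : κ => (s (Sum.inr i) : ℂ)) *ᵥ (q ∘ Sum.inr) := by
    ext i
    simp [mulVec_diagonal]
  calc vnormC ((U * diagonal (fun i => (s i : ℂ)) * Vᴴ) *ᵥ g)
      ≤ vnormC (diagonal (fun i => (s i : ℂ)) *ᵥ q) := by
        rw [← mulVec_mulVec, ← mulVec_mulVec]
        exact (vnormC_mulVec_le U _).trans (mul_le_of_le_one_left (vnormC_nonneg _)
          (l2_opNorm_le_one_of_conjTranspose_mul_self U hU))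
    _ = vnormC (diagonal (fun i : κ => (s (Sum.inr i) : ℂ)) *ᵥ (q ∘ Sum.inr)) := by
        rw [vnormC_eq_vnormC_comp_inr hinl, hinr]
    _ ≤ _ := vnormC_mulVec_le _ _

theorem vnormC_one_sub_mul_mulVec_le [DecidableEq m] (A U : Matrix m (ι ⊕ κ) ℂ)
    (V : Matrix (ι ⊕ κ) (ι ⊕ κ) ℂ) (s : ι ⊕ κ → ℝ) (hU : Uᴴ * U = 1) (hV : Vᴴ * V = 1)
    (hA : A = U * diagonal (fun i => (s i : ℂ)) * Vᴴ) (R : Matrix d (ι ⊕ κ) ℝ)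
    (P : Matrix m m ℂ) (hP : IsStarProjection P)
    (hPY : LinearMap.range (A * Rᵀ.map Complex.ofReal).mulVecLin ≤ LinearMap.range P.mulVecLin)
    {c : ℝ} (hc : 0 < c)
    (hB : ∀ y, c * vnormC y ≤ vnormC ((R.map Complex.ofReal * V.submatrix id Sum.inl) *ᵥ y))
    (x : ι ⊕ κ → ℂ) :
    vnormC (((1 - P) * A) *ᵥ x) ≤ ‖diagonal (fun i : κ => (s (Sum.inr i) : ℂ))‖ *
      (vnormC ((Vᴴ *ᵥ x) ∘ Sum.inr) + ‖R‖ / c * vnormC ((Vᴴ *ᵥ x) ∘ Sum.inl)) := by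
  set Rc : Matrix (ι ⊕ κ) d ℂ := Rᵀ.map Complex.ofReal
  obtain ⟨z, hz, hzc⟩ := exists_conjTranspose_mulVec_eq _ hc hB ((Vᴴ *ᵥ x) ∘ Sum.inl)
  set g := x - Rc *ᵥ z with hgdef
  have hres : ((1 - P) * A) *ᵥ x = (1 - P) *ᵥ (A *ᵥ g) := by
    obtain ⟨w, hw⟩ := hPY ⟨z, rfl⟩
    rw [mulVecLin_apply, mulVecLin_apply, ← mulVec_mulVec] at hw
    have hker : (1 - P) *ᵥ (A *ᵥ (Rc *ᵥ z)) = 0 := by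
      rw [← hw, mulVec_mulVec, hP.one_sub_mul_self, zero_mulVec]
    rw [← mulVec_mulVec, hgdef, mulVec_sub, mulVec_sub, hker, sub_zero]
  have hBH : (R.map Complex.ofReal * V.submatrix id Sum.inl)ᴴ = (V.submatrix id Sum.inl)ᴴ * Rc := by
    rw [conjTranspose_mul, conjTranspose_map_ofReal]
  have hinl : ∀ w, (Vᴴ *ᵥ w) ∘ Sum.inl = (V.submatrix id Sum.inl)ᴴ *ᵥ w := fun _ => rfl
  have hg : (Vᴴ *ᵥ g) ∘ Sum.inl = 0 := by
    rw [mulVec_sub, Pi.sub_comp, hinl (Rc *ᵥ z), mulVec_mulVec, ← hBH, hz, sub_self]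
  have hRz : vnormC (Rc *ᵥ z) ≤ ‖R‖ / c * vnormC ((Vᴴ *ᵥ x) ∘ Sum.inl) := by
    calc vnormC (Rc *ᵥ z) ≤ ‖R‖ * vnormC z := by
          simpa only [l2_opNorm_transpose] using vnormC_map_ofReal_mulVec_le Rᵀ z
      _ ≤ ‖R‖ / c * vnormC ((Vᴴ *ᵥ x) ∘ Sum.inl) := by
          rw [div_mul_eq_mul_div, le_div_iff₀ hc, mul_assoc, mul_comm (vnormC z)]
          exact mul_le_mul_of_nonneg_left hzc (norm_nonneg R)
  have hgr : vnormC ((Vᴴ *ᵥ g) ∘ Sum.inr) ≤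
      vnormC ((Vᴴ *ᵥ x) ∘ Sum.inr) + ‖R‖ / c * vnormC ((Vᴴ *ᵥ x) ∘ Sum.inl) := by
    rw [mulVec_sub, Pi.sub_comp]
    exact (vnormC_sub_le _ _).trans (add_le_add le_rfl ((vnormC_comp_inr_le _).trans
      ((vnormC_conjTranspose_mulVec_le hV _).trans hRz)))
  calc vnormC (((1 - P) * A) *ᵥ x) ≤ vnormC (A *ᵥ g) := by
        rw [hres]
        exact vnormC_mulVec_le_of_isStarProjection hP.one_sub _
    _ ≤ ‖diagonal (fun i : κ => (s (Sum.inr i) : ℂ))‖ * vnormC ((Vᴴ *ᵥ g) ∘ Sum.inr) := by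
        rw [hA]
        exact vnormC_svd_mulVec_le U V s hU g hg
    _ ≤ _ := mul_le_mul_of_nonneg_left hgr (norm_nonneg _)

theorem l2_opNorm_one_sub_mul_le [DecidableEq m] (A U : Matrix m (ι ⊕ κ) ℂ)
    (V : Matrix (ι ⊕ κ) (ι ⊕ κ) ℂ) (s : ι ⊕ κ → ℝ) (hU : Uᴴ * U = 1) (hV : Vᴴ * V = 1)
    (hA : A = U * diagonal (fun i => (s i : ℂ)) * Vᴴ) (R : Matrix d (ι ⊕ κ) ℝ)
    (P : Matrix m m ℂ) (hP : IsStarProjection P)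
    (hPY : LinearMap.range (A * Rᵀ.map Complex.ofReal).mulVecLin ≤ LinearMap.range P.mulVecLin)
    {c : ℝ} (hc : 0 < c)
    (hB : ∀ y, c * vnormC y ≤ vnormC ((R.map Complex.ofReal * V.submatrix id Sum.inl) *ᵥ y)) :
    ‖(1 - P) * A‖ ≤ ‖diagonal (fun i : κ => (s (Sum.inr i) : ℂ))‖ * √(1 + (‖R‖ / c) ^ 2) := by
  refine l2_opNorm_le_of_vnormC_mulVec_le _ (by positivity) fun x => ?_
  set q := Vᴴ *ᵥ x
  have hq : √(vnormC (q ∘ Sum.inr) ^ 2 + vnormC (q ∘ Sum.inl) ^ 2) ≤ vnormC x := by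
    rw [add_comm, ← vnormC_sq_sum_elim, Real.sqrt_sq (vnormC_nonneg q)]
    exact vnormC_conjTranspose_mulVec_le hV x
  calc vnormC (((1 - P) * A) *ᵥ x)
      ≤ ‖diagonal (fun i : κ => (s (Sum.inr i) : ℂ))‖ *
          (vnormC (q ∘ Sum.inr) + ‖R‖ / c * vnormC (q ∘ Sum.inl)) :=
        vnormC_one_sub_mul_mulVec_le A U V s hU hV hA R P hP hPY hc hB x
    _ ≤ ‖diagonal (fun i : κ => (s (Sum.inr i) : ℂ))‖ * (√(1 + (‖R‖ / c) ^ 2) * vnormC x) := by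
        gcongr
        exact (add_mul_le_sqrt_one_add_sq_mul_sqrt _ _ _).trans (by gcongr)
    _ = _ := by ring

end L2OpNorm

theorem specNormC_one_sub_mul_le {m d ι κ : Type*} [Fintype m] [DecidableEq m] [Fintype d]
    [DecidableEq d] [Fintype ι] [DecidableEq ι] [Fintype κ] [DecidableEq κ]
    (A U : Matrix m (ι ⊕ κ) ℂ) (V : Matrix (ι ⊕ κ) (ι ⊕ κ) ℂ)
    (s : ι ⊕ κ → ℝ) (hU : Uᴴ * U = 1) (hV : Vᴴ * V = 1)
    (hA : A = U * diagonal (fun i => (s i : ℂ)) * Vᴴ) (R : Matrix d (ι ⊕ κ) ℝ)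
    (P : Matrix m m ℂ) (hP : IsStarProjection P)
    (hPY : LinearMap.range (A * Rᵀ.map Complex.ofReal).mulVecLin ≤ LinearMap.range P.mulVecLin)
    {c : ℝ} (hc : 0 < c) (hσ : c ≤ sigmaMinC (R.map Complex.ofReal * V.submatrix id Sum.inl)) :
    specNormC ((1 - P) * A) ≤
      specNormC (diagonal (fun i : κ => (s (Sum.inr i) : ℂ))) * √(1 + (specNorm R / c) ^ 2) := by
  rw [specNormC_eq_l2_opNorm, specNormC_eq_l2_opNorm, specNorm_eq_l2_opNorm]
  exact l2_opNorm_one_sub_mul_le A U V s hU hV hA R P hP hPY hc fun y =>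
    (mul_le_mul_of_nonneg_right hσ (vnormC_nonneg y)).trans (sigmaMinC_mul_le _ y)

/-- `A` has `n = r + k` columns, indexed by `Fin r ⊕ Fin k`; `d` is the sketch dimension and
`specNormC Σ₂` stands for `σ_{r+1}(A)`. -/
theorem stmt14_general {Ω : Type*} [MeasureSpace Ω]
    {m r k d α : ℕ}
    (A U : Matrix (Fin m) (Fin r ⊕ Fin k) ℂ)
    (V : Matrix (Fin r ⊕ Fin k) (Fin r ⊕ Fin k) ℂ)
    (s : Fin r ⊕ Fin k → ℝ)
    (hU : Uᴴ * U = 1) (hV : Vᴴ * V = 1)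
    (hA : A = U * Matrix.diagonal (fun i => (s i : ℂ)) * Vᴴ)
    (ε δ : ℝ) (hε : ε ∈ Set.Ioo (0:ℝ) 1)
    (μ : ℝ) (hμ : μ = (r + k) * α / d)
    -- the random sketching matrix:
    (R : Ω → Matrix (Fin d) (Fin r ⊕ Fin k) ℝ)
    -- for each outcome, `P ω` is the orthogonal projector onto the column
    -- space of `Y ω = A (R ω)ᵀ`:
    (P : Ω → Matrix (Fin m) (Fin m) ℂ)
    (hP : ∀ ω, (P ω).IsHermitian ∧ P ω * P ω = P ω ∧
      LinearMap.range (P ω).mulVecLin =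
        LinearMap.range (A * ((R ω)ᵀ.map (fun a => (a : ℂ)))).mulVecLin)
    -- with probability at least `1 − δ`, both the norm bound and the smallest
    -- singular value bound hold:
    (hevent : ENNReal.ofReal (1 - δ) ≤
      volume {ω |
        specNorm (R ω) ^ 2 ≤
          max (Real.exp 1 ^ 2 * μ) (Real.log (2 * d / δ) - μ) ∧
        1 - ε ≤ sigmaMinC (((R ω).map (fun a => (a : ℂ))) *
          V.submatrix id Sum.inl) ^ 2}) :
    ENNReal.ofReal (1 - δ) ≤
      volume {ω |
        specNormC ((1 - P ω) * A) ≤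
          specNormC (Matrix.diagonal (fun i : Fin k => (s (Sum.inr i) : ℂ))) *
            Real.sqrt (1 + (1 / (1 - ε)) *
              max (Real.exp 1 ^ 2 * (r + k) * α / d)
                  (Real.log (2 * d / δ) - (r + k) * α / d))} := by
  obtain ⟨-, hε1⟩ := hε
  refine hevent.trans (measure_mono fun ω ⟨hR, hσ⟩ => ?_)
  obtain ⟨hPH, hPP, hPY⟩ := hP ω
  have hc : 0 < √(1 - ε) := Real.sqrt_pos.mpr (sub_pos.mpr hε1)
  have hσ' : √(1 - ε) ≤ sigmaMinC (((R ω).map Complex.ofReal) * V.submatrix id Sum.inl) :=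
    (Real.sqrt_le_sqrt hσ).trans_eq (Real.sqrt_sq (sigmaMinC_nonneg _))
  have hmax : max (Real.exp 1 ^ 2 * (r + k) * α / d) (Real.log (2 * d / δ) - (r + k) * α / d) =
      max (Real.exp 1 ^ 2 * μ) (Real.log (2 * d / δ) - μ) := by
    rw [hμ]; congr 1; ring
  refine (specNormC_one_sub_mul_le A U V s hU hV hA (R ω) (P ω) ⟨hPP, hPH⟩ hPY.ge hc hσ').trans ?_
  rw [hmax, div_pow, Real.sq_sqrt (sub_nonneg.mpr hε1.le), one_div_mul_eq_div]
  exact mul_le_mul_of_nonneg_left (by gcongr) (specNormC_nonneg _)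

/-- SJLT range-finder bound.  The matrix `A` has `n = r + k` columns, indexed by
`Fin r ⊕ Fin k` (so `r < min(m,n)` reads `r < m` and `0 < k`), `d` is the sketch
dimension, `μ = nα/d`, and `specNormC Σ₂` is `σ_{r+1}(A)`. -/
theorem stmt14 {Ω : Type*} [MeasureSpace Ω] [IsProbabilityMeasure (volume : Measure Ω)]
    {m r k d α : ℕ} (hrm : r < m) (hk : 0 < k) (hd : 0 < d)
    (A U : Matrix (Fin m) (Fin r ⊕ Fin k) ℂ)
    (V : Matrix (Fin r ⊕ Fin k) (Fin r ⊕ Fin k) ℂ)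
    (s : Fin r ⊕ Fin k → ℝ)
    (hU : Uᴴ * U = 1) (hV : Vᴴ * V = 1)
    (hs0 : ∀ i, 0 ≤ s i)
    (hsmono : ∀ i j : Fin (r + k), i ≤ j →
      s (finSumFinEquiv.symm j) ≤ s (finSumFinEquiv.symm i))
    (hA : A = U * Matrix.diagonal (fun i => (s i : ℂ)) * Vᴴ)
    (ε δ : ℝ) (hε : ε ∈ Set.Ioo (0:ℝ) 1) (hδ : δ ∈ Set.Ioo (0:ℝ) 1)
    (μ : ℝ) (hμ : μ = (r + k) * α / d)
    -- the random sketching matrix: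
    (R : Ω → Matrix (Fin d) (Fin r ⊕ Fin k) ℝ)
    -- for each outcome, `P ω` is the orthogonal projector onto the column
    -- space of `Y ω = A (R ω)ᵀ`:
    (P : Ω → Matrix (Fin m) (Fin m) ℂ)
    (hP : ∀ ω, (P ω).IsHermitian ∧ P ω * P ω = P ω ∧
      LinearMap.range (P ω).mulVecLin =
        LinearMap.range (A * ((R ω)ᵀ.map (fun a => (a : ℂ)))).mulVecLin)
    -- with probability at least `1 − δ`, both the norm bound and the smallest
    -- singular value bound hold:
    (hevent : ENNReal.ofReal (1 - δ) ≤
      volume {ω |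
        specNorm (R ω) ^ 2 ≤
          max (Real.exp 1 ^ 2 * μ) (Real.log (2 * d / δ) - μ) ∧
        1 - ε ≤ sigmaMinC (((R ω).map (fun a => (a : ℂ))) *
          V.submatrix id Sum.inl) ^ 2}) :
    ENNReal.ofReal (1 - δ) ≤
      volume {ω |
        specNormC ((1 - P ω) * A) ≤
          specNormC (Matrix.diagonal (fun i : Fin k => (s (Sum.inr i) : ℂ))) *
            Real.sqrt (1 + (1 / (1 - ε)) *
              max (Real.exp 1 ^ 2 * (r + k) * α / d)
                  (Real.log (2 * d / δ) - (r + k) * α / d))} :=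
  stmt14_general A U V s hU hV hA ε δ hε μ hμ R P hP hevent
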